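/- arXiv:1004.2193 — 4 statements merged into one kernel-verified Lean document; each statement's English description precedes it below -/
import Mathlib

section
/- In ℚ[X]: f_{-8}^{C_6}(X) = f_{-1}^{C_3}(X)·f_{-15}^{C_3}(X), f_{-3}^{C_6}(X) = f_0^{C_3}(X)·f_{-6}^{C_3}(X), f_0^{C_6}(X) = f_3^{C_3}(X)·f_{-3}^{C_3}(X), and f_5^{C_6}(X) = f_{12}^{C_3}(X)·f_{-2}^{C_3}(X). -/
open Polynomial

noncomputable def fC6 (m : ℚ) : ℚ[X] :=
  X^6 - C (2*m)*X^5 - C (5*(m+3))*X^4 - C 20*X^3 + C (5*m)*X^2 + C (2*(m+3))*X + 1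

noncomputable def fC3 (m : ℚ) : ℚ[X] := X^3 - C m*X^2 - C (m+3)*X - 1

/- Comparing coefficients, `fC3 a * fC3 b = fC6 m` holds exactly when `a` and `b` are the roots
of `t^2 - 2 m t - 3 m - 9`; the remaining coefficients (of `X^3`, `X^2`, `X`) then agree
automatically. So `fC6 m` splits into two cubics of this family over `ℚ` whenever
the discriminant `4 (m^2 + 3 m + 9)` is a rational square. -/

theorem fC6_eq_fC3_mul_fC3 {m a b : ℚ} (hsum : a + b = 2 * m) (hprod : a * b = -3 * m - 9) :
    fC6 m = fC3 a * fC3 b := by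
  have hsum' : C a + C b = 2 * C m := by
    simpa only [map_add, map_mul, map_ofNat] using congrArg C hsum
  have hprod' : C a * C b = -3 * C m - 9 := by
    simpa only [map_mul, map_sub, map_neg, map_ofNat] using congrArg C hprod
  simp only [fC6, fC3, map_mul, map_add, map_ofNat]
  linear_combination (X^5 + X^4 - 3 * X^3 - 4 * X^2 - X) * hsum' -
    (X^4 + 2 * X^3 + X^2) * hprod'

theorem stmt7 :
    fC6 (-8) = fC3 (-1) * fC3 (-15) ∧ fC6 (-3) = fC3 0 * fC3 (-6) ∧
    fC6 0 = fC3 3 * fC3 (-3) ∧ fC6 5 = fC3 12 * fC3 (-2) :=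
  ⟨fC6_eq_fC3_mul_fC3 (by norm_num) (by norm_num), fC6_eq_fC3_mul_fC3 (by norm_num) (by norm_num),
    fC6_eq_fC3_mul_fC3 (by norm_num) (by norm_num), fC6_eq_fC3_mul_fC3 (by norm_num) (by norm_num)⟩
end

section
/- Let K be a field of characteristic not 2 or 3 and let z ∈ K with z(z+1)(z-1)(z+2)(2z+1) ≠ 0. Set s = (z^6 - 15z^4 - 20z^3 + 6z + 1)/(z(2z^4 + 5z^3 - 5z - 2)). Then z is a root of f_s^{C_6}(X) = X^6 - 2sX^5 - 5(s+3)X^4 - 20X^3 + 5sX^2 + 2(s+3)X + 1. -/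
/-! The value of `f_s^{C_6}` at `z` is affine in `s`, with `s`-coefficient `-z(2z⁴ + 5z³ - 5z - 2)`;
the given `s` is the unique root of that affine function, and the coefficient is nonzero because
it factors as `-z(z+1)(z-1)(z+2)(2z+1)`. -/

theorem C6_poly_eval_eq_sub_mul {K : Type*} [CommRing K] (s z : K) :
    z^6 - 2*s*z^5 - 5*(s+3)*z^4 - 20*z^3 + 5*s*z^2 + 2*(s+3)*z + 1
      = (z^6 - 15*z^4 - 20*z^3 + 6*z + 1) - s * (z*(2*z^4 + 5*z^3 - 5*z - 2)) := by
  ring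

theorem C6_denom_eq {K : Type*} [CommRing K] (z : K) :
    z*(2*z^4 + 5*z^3 - 5*z - 2) = z*(z+1)*(z-1)*(z+2)*(2*z+1) := by
  ring

theorem stmt9_general (K : Type*) [Field K]
    (z : K) (hz : z*(z+1)*(z-1)*(z+2)*(2*z+1) ≠ 0)
    (s : K) (hs : s = (z^6 - 15*z^4 - 20*z^3 + 6*z + 1) / (z*(2*z^4 + 5*z^3 - 5*z - 2))) :
    z^6 - 2*s*z^5 - 5*(s+3)*z^4 - 20*z^3 + 5*s*z^2 + 2*(s+3)*z + 1 = 0 := by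
  have hd : z*(2*z^4 + 5*z^3 - 5*z - 2) ≠ 0 := C6_denom_eq z ▸ hz
  rw [C6_poly_eval_eq_sub_mul, hs, div_mul_cancel₀ _ hd, sub_self]

theorem stmt9 (K : Type*) [Field K] (h2 : (2 : K) ≠ 0) (h3 : (3 : K) ≠ 0)
    (z : K) (hz : z*(z+1)*(z-1)*(z+2)*(2*z+1) ≠ 0)
    (s : K) (hs : s = (z^6 - 15*z^4 - 20*z^3 + 6*z + 1) / (z*(2*z^4 + 5*z^3 - 5*z - 2))) :
    z^6 - 2*s*z^5 - 5*(s+3)*z^4 - 20*z^3 + 5*s*z^2 + 2*(s+3)*z + 1 = 0 :=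
  stmt9_general K z hz s hs
end

section
/- Let K be a field of characteristic not 2 or 3, and let z_3 ∈ K satisfy the simplest cubic equation z_3^3 - s·z_3^2 - (s+3)·z_3 - 1 = 0 for some s ∈ K, with z_3 ≠ 0 and z_3 ≠ -1. Then -1/(z_3+1) and -(z_3+1)/z_3 are also roots of X^3 - sX^2 - (s+3)X - 1. -/
/-! The Möbius map `σ x = -1/(x+1)` has order three, with `σ² x = -(x+1)/x`, and the simplest cubic
`f_s` transforms under it by a nonvanishing factor: `(x+1)³ f_s(σ x) = -f_s(x)` and
`x³ f_s(σ² x) = f_s(x)`. So `σ` permutes the roots of `f_s`. -/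

section

variable {K : Type*} [Field K]

def simplestCubic (s x : K) : K := x ^ 3 - s * x ^ 2 - (s + 3) * x - 1

lemma simplestCubic_neg_one_div_add_one (s x : K) (hx : x + 1 ≠ 0) :
    simplestCubic s (-1 / (x + 1)) = -simplestCubic s x / (x + 1) ^ 3 := by
  unfold simplestCubic
  field_simp
  ring

lemma simplestCubic_neg_add_one_div (s x : K) (hx : x ≠ 0) :
    simplestCubic s (-(x + 1) / x) = simplestCubic s x / x ^ 3 := by
  unfold simplestCubic
  field_simp
  ring

end

theorem stmt12_general (K : Type*) [Field K]
    (s z₃ : K) (h0 : z₃ ≠ 0) (h1 : z₃ ≠ -1)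
    (hroot : z₃^3 - s*z₃^2 - (s+3)*z₃ - 1 = 0) :
    ((-1/(z₃+1))^3 - s*(-1/(z₃+1))^2 - (s+3)*(-1/(z₃+1)) - 1 = 0) ∧
    ((-(z₃+1)/z₃)^3 - s*(-(z₃+1)/z₃)^2 - (s+3)*(-(z₃+1)/z₃) - 1 = 0) := by
  have hf : simplestCubic s z₃ = 0 := hroot
  have hz1 : z₃ + 1 ≠ 0 := by rwa [Ne, add_eq_zero_iff_eq_neg]
  refine ⟨(simplestCubic_neg_one_div_add_one s z₃ hz1).trans ?_,
    (simplestCubic_neg_add_one_div s z₃ h0).trans ?_⟩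
  all_goals simp [hf]

theorem stmt12 (K : Type*) [Field K] (h2 : (2 : K) ≠ 0) (h3 : (3 : K) ≠ 0)
    (s z₃ : K) (h0 : z₃ ≠ 0) (h1 : z₃ ≠ -1)
    (hroot : z₃^3 - s*z₃^2 - (s+3)*z₃ - 1 = 0) :
    ((-1/(z₃+1))^3 - s*(-1/(z₃+1))^2 - (s+3)*(-1/(z₃+1)) - 1 = 0) ∧
    ((-(z₃+1)/z₃)^3 - s*(-(z₃+1)/z₃)^2 - (s+3)*(-(z₃+1)/z₃) - 1 = 0) :=
  stmt12_general K s z₃ h0 h1 hroot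
end

section
/- For all integers m, x, y with x ≢ y (mod 3), F_m(x,y) ≡ 1 (mod 3), where F_m(X,Y) = X^6 - 2mX^5Y - 5(m+3)X^4Y^2 - 20X^3Y^3 + 5mX^2Y^4 + 2(m+3)XY^5 + Y^6. -/
/-!
The coefficients of `F m x y - (x - y) ^ 6` not involving `m` are divisible by 3, and its
`m`-part is `-m * x * y * (x ^ 2 - y ^ 2) * (2 * x + y) * (x + 2 * y)`, where
`x * y * (x ^ 2 - y ^ 2) = y * (x ^ 3 - x) - x * (y ^ 3 - y)` is divisible by 3 by Fermat.
Hence `F m x y ≡ (x - y) ^ 6 (mod 3)`, and Fermat again gives `(x - y) ^ 2 ≡ 1` when `x ≢ y`.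
-/

def F (m x y : ℤ) : ℤ :=
  x^6 - 2*m*x^5*y - 5*(m+3)*x^4*y^2 - 20*x^3*y^3 + 5*m*x^2*y^4 + 2*(m+3)*x*y^5 + y^6

theorem three_dvd_mul_mul_sq_sub_sq (x y : ℤ) : 3 ∣ x * y * (x ^ 2 - y ^ 2) := by
  have hx := Int.prime_dvd_pow_self_sub Nat.prime_three x
  have hy := Int.prime_dvd_pow_self_sub Nat.prime_three y
  push_cast at hx hy
  have h : x * y * (x ^ 2 - y ^ 2) = y * (x ^ 3 - x) - x * (y ^ 3 - y) := by ring
  rw [h]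
  exact dvd_sub (dvd_mul_of_dvd_right hx y) (dvd_mul_of_dvd_right hy x)

theorem F_modEq_sub_pow_six (m x y : ℤ) : F m x y ≡ (x - y) ^ 6 [ZMOD 3] := by
  have h : (x - y) ^ 6 - F m x y = m * (x * y * (x ^ 2 - y ^ 2)) * (2*x + y) * (x + 2*y)
      - 3 * (2*x^5*y - 10*x^4*y^2 - 5*x^2*y^4 + 4*x*y^5) := by
    unfold F; ring
  rw [Int.modEq_iff_dvd, h]
  refine dvd_sub ?_ (dvd_mul_right 3 _)
  exact ((dvd_mul_of_dvd_right (three_dvd_mul_mul_sq_sub_sq x y) m).mul_right _).mul_right _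

theorem stmt18 (m x y : ℤ) (h : ¬ x ≡ y [ZMOD 3]) : F m x y ≡ 1 [ZMOD 3] := by
  have hcop : IsCoprime (x - y) ((3 : ℕ) : ℤ) := by
    rw [isCoprime_comm, Nat.cast_ofNat, Int.prime_three.coprime_iff_not_dvd]
    exact fun hdvd => h ((Int.modEq_iff_dvd.mpr hdvd).symm)
  calc F m x y ≡ ((x - y) ^ (3 - 1)) ^ 3 [ZMOD 3] := by
        simpa only [← pow_mul] using F_modEq_sub_pow_six m x y
    _ ≡ 1 [ZMOD 3] := by
        simpa using (Int.ModEq.pow_card_sub_one_eq_one Nat.prime_three hcop).pow 3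
end
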